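/- arXiv:1709.00400 — 9 statements merged into one kernel-verified Lean document; each statement's English description precedes it below -/
import Mathlib

section
/- Let $x, k, y, n$ be positive integers satisfying $(x+1)^k + (x+2)^k + \cdots + (2x)^k = y^n$. If $x \equiv 0 \pmod{4}$ and either $k = 1$ or $k$ is even, then $n \le v_2(x) - 1$. -/
open Finset

/-! Write `x = 2 ^ (a + 1) * c` with `c` odd. The numbers `x + 1, …, 2x` run through `c` complete
residue systems modulo `2 ^ (a + 1)`, so `T k x ≡ c * ∑ j < 2 ^ (a + 1), j ^ k`. This power sum is
`≡ 2 ^ a`: for `k = 1` by Gauss' formula, and for even `k` by induction on the exponent, since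
`(j + 2 ^ m) ^ k ≡ j ^ k [MOD 2 ^ (m + 1)]` for `m ≥ 1` makes the sum over `[0, 2 ^ (m + 1))`
twice the sum over `[0, 2 ^ m)`. Hence `y ^ n = T k x ≡ 2 ^ a [MOD 2 ^ (a + 1)]` with `a ≥ 1`, so `2 ∣ y`, and
then `2 ^ n ∣ y ^ n` rules out `n > a`. -/

/-- `T k x = (x+1)^k + (x+2)^k + ... + (2x)^k`. -/
def T (k x : ℕ) : ℕ := ∑ i ∈ Finset.Icc (x + 1) (2 * x), i ^ k

theorem Function.Periodic.sum_Ico_add_eq_sum_range {M : Type*} [AddCommMonoid M] {f : ℕ → M}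
    {q : ℕ} (hf : Function.Periodic f q) (a : ℕ) :
    ∑ i ∈ Ico a (a + q), f i = ∑ i ∈ range q, f i := by
  rw [← Nat.image_Ico_mod a q, sum_image (Nat.mod_injOn_Ico a q)]
  exact sum_congr rfl fun i _ => (hf.map_mod_nat i).symm

theorem Function.Periodic.sum_Ico_add_mul_eq_nsmul {M : Type*} [AddCommMonoid M] {f : ℕ → M}
    {q : ℕ} (hf : Function.Periodic f q) (a c : ℕ) :
    ∑ i ∈ Ico a (a + q * c), f i = c • ∑ i ∈ range q, f i := by
  induction c with
  | zero => simp
  | succ c ih =>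
    rw [mul_add_one, ← add_assoc,
      ← sum_Ico_consecutive f (Nat.le_add_right a (q * c)) (Nat.le_add_right _ q), ih,
      hf.sum_Ico_add_eq_sum_range, succ_nsmul]

theorem Nat.add_pow_modEq_pow {n a k : ℕ} (hsq : n ∣ a ^ 2) (hka : n ∣ k * a) (j : ℕ) :
    (j + a) ^ k ≡ j ^ k [MOD n] := by
  refine (Nat.modEq_iff_dvd.2 ?_).symm
  have hquad : (n : ℤ) ∣ (j + a) ^ k - j ^ (k - 1) * a * k - j ^ k :=
    (Int.natCast_dvd_natCast.2 hsq).trans (by exact_mod_cast sq_dvd_add_pow_sub_sub (a : ℤ) j k)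
  have hlin : (n : ℤ) ∣ j ^ (k - 1) * a * k :=
    (Int.natCast_dvd_natCast.2 hka).trans ⟨j ^ (k - 1), by push_cast; ring⟩
  have := dvd_add hquad hlin
  rw [sub_right_comm, sub_add_cancel] at this
  exact_mod_cast this

theorem Odd.mul_two_pow_modEq {c : ℕ} (hc : Odd c) (m : ℕ) :
    c * 2 ^ m ≡ 2 ^ m [MOD 2 ^ (m + 1)] := by
  obtain ⟨d, rfl⟩ := hc
  calc (2 * d + 1) * 2 ^ m = 2 ^ m + 2 ^ (m + 1) * d := by ring
    _ ≡ 2 ^ m [MOD 2 ^ (m + 1)] := Nat.add_modEq_left_iff.2 (dvd_mul_right _ _)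

theorem sum_range_two_pow_modEq (m : ℕ) :
    ∑ j ∈ range (2 ^ (m + 1)), j ≡ 2 ^ m [MOD 2 ^ (m + 1)] := by
  have hgauss : ∑ j ∈ range (2 ^ (m + 1)), j = (2 ^ (m + 1) - 1) * 2 ^ m := by
    have := sum_range_id_mul_two (2 ^ (m + 1))
    rw [pow_succ] at this ⊢
    nlinarith
  have hodd : Odd (2 ^ (m + 1) - 1) :=
    Nat.Even.sub_odd Nat.one_le_two_pow (Nat.even_pow.2 ⟨even_two, m.succ_ne_zero⟩) odd_one
  rw [hgauss]
  exact hodd.mul_two_pow_modEq m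

theorem sum_range_two_pow_pow_modEq_of_even {k : ℕ} (hk : k ≠ 0) (heven : Even k) :
    ∀ m : ℕ, ∑ j ∈ range (2 ^ (m + 1)), j ^ k ≡ 2 ^ m [MOD 2 ^ (m + 1)]
  | 0 => by simp [sum_range_succ, hk]; rfl
  | m + 1 => by
    have hshift (j : ℕ) : (j + 2 ^ (m + 1)) ^ k ≡ j ^ k [MOD 2 ^ (m + 2)] := by
      obtain ⟨r, rfl⟩ := heven
      refine Nat.add_pow_modEq_pow ?_ ⟨r, by ring⟩ j
      rw [← pow_mul]
      exact pow_dvd_pow 2 (by lia)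
    calc ∑ j ∈ range (2 ^ (m + 2)), j ^ k
        = ∑ j ∈ range (2 ^ (m + 1)), j ^ k
          + ∑ j ∈ range (2 ^ (m + 1)), (2 ^ (m + 1) + j) ^ k := by
          rw [pow_succ 2 (m + 1), mul_two, sum_range_add]
      _ ≡ ∑ j ∈ range (2 ^ (m + 1)), j ^ k + ∑ j ∈ range (2 ^ (m + 1)), j ^ k
          [MOD 2 ^ (m + 2)] := by
          refine Nat.ModEq.add_left _ (Nat.ModEq.sum fun j _ => ?_)
          rw [add_comm (2 ^ (m + 1)) j]
          exact hshift j
      _ = 2 * ∑ j ∈ range (2 ^ (m + 1)), j ^ k := (two_mul _).symm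
      _ ≡ 2 * 2 ^ m [MOD 2 ^ (m + 2)] := by
          rw [pow_succ' 2 (m + 1)]
          exact (sum_range_two_pow_pow_modEq_of_even hk heven m).mul_left' 2
      _ = 2 ^ (m + 1) := (pow_succ' 2 m).symm

theorem sum_range_two_pow_pow_modEq {k : ℕ} (hk : k ≠ 0) (hk1 : k = 1 ∨ Even k) (m : ℕ) :
    ∑ j ∈ range (2 ^ (m + 1)), j ^ k ≡ 2 ^ m [MOD 2 ^ (m + 1)] := by
  rcases hk1 with rfl | hk1
  · simpa using sum_range_two_pow_modEq m
  · exact sum_range_two_pow_pow_modEq_of_even hk hk1 m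

theorem T_two_pow_mul_odd_modEq {k c : ℕ} (hk : k ≠ 0) (hk1 : k = 1 ∨ Even k) (hc : Odd c)
    (m : ℕ) : T k (2 ^ (m + 1) * c) ≡ 2 ^ m [MOD 2 ^ (m + 1)] := by
  set q := 2 ^ (m + 1)
  have hblocks : T k (q * c) ≡ c * ∑ j ∈ range q, j ^ k [MOD q] := by
    have hper : Function.Periodic (fun i : ℕ => (i : ZMod q) ^ k) q := fun i => by simp
    rw [← ZMod.natCast_eq_natCast_iff, T, ← Ico_add_one_right_eq_Icc,
      show 2 * (q * c) + 1 = q * c + 1 + q * c by ring]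
    push_cast
    rw [hper.sum_Ico_add_mul_eq_nsmul, nsmul_eq_mul]
  calc T k (q * c) ≡ c * ∑ j ∈ range q, j ^ k [MOD q] := hblocks
    _ ≡ c * 2 ^ m [MOD q] := (sum_range_two_pow_pow_modEq hk hk1 m).mul_left c
    _ ≡ 2 ^ m [MOD q] := hc.mul_two_pow_modEq m

theorem Nat.le_of_pow_modEq_prime_pow {p y n a : ℕ} (hp : p.Prime) (ha : a ≠ 0)
    (h : y ^ n ≡ p ^ a [MOD p ^ (a + 1)]) : n ≤ a := by
  have hpy : p ∣ y ^ n := (h.dvd_iff (dvd_pow_self p (Nat.succ_ne_zero a))).2 (dvd_pow_self p ha)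
  by_contra! hn
  have hdvd : p ^ (a + 1) ∣ y ^ n :=
    (Nat.pow_dvd_pow p hn).trans (pow_dvd_pow_of_dvd (hp.dvd_of_dvd_pow hpy) n)
  have := Nat.pow_dvd_pow_iff_le_right hp.one_lt |>.1 ((h.dvd_iff dvd_rfl).1 hdvd)
  lia

theorem stmt_0_general (x k y n : ℕ) (hx : 0 < x) (hk : 0 < k)
    (heq : T k x = y ^ n) (hx4 : x % 4 = 0) (hk1 : k = 1 ∨ Even k) :
    n ≤ padicValNat 2 x - 1 := by
  obtain ⟨e, c, hc, rfl⟩ := Nat.exists_eq_two_pow_mul_odd hx.ne'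
  have hv : padicValNat 2 (2 ^ e * c) = e := by
    rw [padicValNat.mul (by positivity) hc.pos.ne', padicValNat.prime_pow,
      padicValNat.eq_zero_of_not_dvd hc.not_two_dvd_nat, add_zero]
  have he : 2 ≤ e :=
    hv ▸ (padicValNat_dvd_iff_le (p := 2) hx.ne').1 (Nat.dvd_of_mod_eq_zero hx4)
  obtain ⟨a, rfl⟩ : ∃ a, e = a + 1 := ⟨e - 1, by lia⟩
  rw [hv, Nat.add_sub_cancel]
  exact Nat.le_of_pow_modEq_prime_pow Nat.prime_two (by lia)
    (heq ▸ T_two_pow_mul_odd_modEq hk.ne' hk1 hc a)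

theorem stmt_0 (x k y n : ℕ) (hx : 0 < x) (hk : 0 < k) (hy : 0 < y) (hn : 0 < n)
    (heq : T k x = y ^ n) (hx4 : x % 4 = 0) (hk1 : k = 1 ∨ Even k) :
    n ≤ padicValNat 2 x - 1 :=
  stmt_0_general x k y n hx hk heq hx4 hk1
end

section
/- Let $x, y, n$ be positive integers satisfying $(x+1) + (x+2) + \cdots + (2x) = y^n$. If $x \equiv 1 \pmod{4}$, then $n \le v_2(3x+1) - 1$. -/
/-
Since `2 T₁(x) = (3x + 1) x`, for odd `x` we get `v₂(T₁(x)) = v₂(3x + 1) - 1`, which is at least `1`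
when `x ≡ 1 (mod 4)`. Then `y` is even, so `n ≤ n v₂(y) = v₂(yⁿ) = v₂(T₁(x))`.
-/

open Finset

theorem T_one_mul_two (x : ℕ) : T 1 x * 2 = (3 * x + 1) * x := by
  have hT : T 1 x = ∑ i ∈ Ico (x + 1) (2 * x + 1), i := by
    simp only [T, pow_one, ← Ico_add_one_right_eq_Icc]
  have hsplit := sum_range_add_sum_Ico id (show x + 1 ≤ 2 * x + 1 by omega)
  have hfirst := sum_range_id_mul_two (x + 1)
  have hwhole := sum_range_id_mul_two (2 * x + 1)
  simp only [id, Nat.add_sub_cancel] at hsplit hfirst hwhole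
  rw [hT]
  nlinarith

theorem T_one_ne_zero {x : ℕ} (hx : x ≠ 0) : T 1 x ≠ 0 := by
  intro h
  have := T_one_mul_two x
  simp_all

theorem padicValNat_two_T_one_add_one {x : ℕ} (hx : Odd x) :
    padicValNat 2 (T 1 x) + 1 = padicValNat 2 (3 * x + 1) := by
  have hx0 : x ≠ 0 := hx.pos.ne'
  have := congrArg (padicValNat 2) (T_one_mul_two x)
  rwa [padicValNat.mul (T_one_ne_zero hx0) two_ne_zero, padicValNat.mul (by omega) hx0,
    padicValNat.self one_lt_two, padicValNat.eq_zero_of_not_dvd hx.not_two_dvd_nat,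
    add_zero] at this

theorem two_dvd_T_one {x : ℕ} (hx : x % 4 = 1) : 2 ∣ T 1 x := by
  have h4 : 2 * 2 ∣ T 1 x * 2 := T_one_mul_two x ▸ Dvd.dvd.mul_right (by omega) x
  exact Nat.dvd_of_mul_dvd_mul_right two_pos h4

theorem le_padicValNat_pow_of_dvd {p y n : ℕ} [hp : Fact p.Prime] (hdvd : p ∣ y ^ n)
    (hne : y ^ n ≠ 0) : n ≤ padicValNat p (y ^ n) :=
  (padicValNat_dvd_iff_le hne).mp (pow_dvd_pow_of_dvd (hp.out.dvd_of_dvd_pow hdvd) n)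

theorem stmt_2_general (x y n : ℕ)
    (heq : T 1 x = y ^ n) (hx4 : x % 4 = 1) :
    n ≤ padicValNat 2 (3 * x + 1) - 1 := by
  have hodd : Odd x := Nat.odd_iff.mpr (by omega)
  have hval := padicValNat_two_T_one_add_one hodd
  have hle : n ≤ padicValNat 2 (T 1 x) := heq ▸
    le_padicValNat_pow_of_dvd (heq ▸ two_dvd_T_one hx4) (heq ▸ T_one_ne_zero hodd.pos.ne')
  omega

theorem stmt_2 (x y n : ℕ) (hx : 0 < x) (hy : 0 < y) (hn : 0 < n)
    (heq : T 1 x = y ^ n) (hx4 : x % 4 = 1) :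
    n ≤ padicValNat 2 (3 * x + 1) - 1 :=
  stmt_2_general x y n heq hx4
end

section
/- Let $x, y, n$ be positive integers satisfying $(x+1)^2 + (x+2)^2 + \cdots + (2x)^2 = y^n$. If $x \equiv 1 \pmod{8}$ and $x \not\equiv 1 \pmod{32}$, then $n \le v_2(7x+1) - 1$. -/
/-!
Summing squares gives `6 T₂(x) = x (2x + 1) (7x + 1)`. For odd `x` the first two factors are odd,
so `v₂(T₂(x)) = v₂(7x + 1) - 1`, which is positive once `4 ∣ 7x + 1`, in particular for
`x ≡ 1 (mod 8)`. Then `2 ∣ yⁿ` forces `2 ∣ y`, and `n ≤ n v₂(y) = v₂(T₂(x))`.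
-/

open Finset

lemma six_mul_sum_range_succ_sq (m : ℕ) :
    6 * ∑ i ∈ range (m + 1), i ^ 2 = m * (m + 1) * (2 * m + 1) := by
  induction m with
  | zero => rfl
  | succ m ih => rw [sum_range_succ, mul_add, ih]; ring

lemma sum_range_add_T (k x : ℕ) :
    ∑ i ∈ range (x + 1), i ^ k + T k x = ∑ i ∈ range (2 * x + 1), i ^ k := by
  rw [T, ← Ico_add_one_right_eq_Icc, sum_range_add_sum_Ico _ (by omega)]

lemma six_mul_T_two (x : ℕ) : 6 * T 2 x = x * (2 * x + 1) * (7 * x + 1) := by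
  have h := congrArg (6 * ·) (sum_range_add_T 2 x)
  simp only [mul_add, six_mul_sum_range_succ_sq] at h
  nlinarith

lemma padicValNat_two_T_two {x : ℕ} (hx : Odd x) :
    padicValNat 2 (T 2 x) + 1 = padicValNat 2 (7 * x + 1) := by
  have hodd : ¬ 2 ∣ x * (2 * x + 1) := by
    rw [← even_iff_two_dvd, Nat.not_even_iff_odd]
    exact hx.mul (odd_two_mul_add_one x)
  have hx0 : x ≠ 0 := hx.pos.ne'
  have hT : T 2 x ≠ 0 := fun h0 => by
    have h := six_mul_T_two x
    rw [h0, mul_zero] at h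
    exact absurd h.symm (by positivity)
  have h6 : padicValNat 2 6 = 1 := by
    rw [show 6 = 2 * 3 from rfl, padicValNat.mul two_ne_zero three_ne_zero,
      padicValNat.self one_lt_two, padicValNat.eq_zero_of_not_dvd (by decide)]
  have h := congrArg (padicValNat 2) (six_mul_T_two x)
  rwa [padicValNat.mul (by norm_num) hT, padicValNat.mul (by positivity) (by omega),
    padicValNat.eq_zero_of_not_dvd hodd, h6, add_comm, zero_add] at h

lemma le_padicValNat_pow {p y : ℕ} [Fact p.Prime] (n : ℕ) (hy : y ≠ 0) (h : p ∣ y ^ n) :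
    n ≤ padicValNat p (y ^ n) := by
  have hpy : 1 ≤ padicValNat p y :=
    one_le_padicValNat_of_dvd hy (Nat.Prime.dvd_of_dvd_pow Fact.out h)
  rw [padicValNat.pow]
  exact Nat.le_mul_of_pos_right n hpy

theorem stmt_3_general (x y n : ℕ) (hy : 0 < y)
    (heq : T 2 x = y ^ n) (hx8 : x % 8 = 1) :
    n ≤ padicValNat 2 (7 * x + 1) - 1 := by
  have hv := padicValNat_two_T_two (x := x) (Nat.odd_iff.mpr (by omega))
  have h4 : 2 ≤ padicValNat 2 (7 * x + 1) :=
    (padicValNat_dvd_iff_le (by omega)).mp (by omega : 2 ^ 2 ∣ 7 * x + 1)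
  rw [heq] at hv
  have h2 : 2 ∣ y ^ n := dvd_of_one_le_padicValNat (by omega)
  have := le_padicValNat_pow n hy.ne' h2
  omega

theorem stmt_3 (x y n : ℕ) (hx : 0 < x) (hy : 0 < y) (hn : 0 < n)
    (heq : T 2 x = y ^ n) (hx8 : x % 8 = 1) (hx32 : x % 32 ≠ 1) :
    n ≤ padicValNat 2 (7 * x + 1) - 1 :=
  stmt_3_general x y n hy heq hx8
end

section
/- Let $x, y, n$ be positive integers satisfying $(x+1)^3 + (x+2)^3 + \cdots + (2x)^3 = y^n$. If $x \equiv 1 \pmod{8}$ and $x \not\equiv 1 \pmod{32}$, then $n \le v_2((5x+3)(3x+1)) - 2$. -/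
/-!
Subtracting the two sums of cubes `(2x(2x+1)/2)^2 - (x(x+1)/2)^2` gives
`4 T₃(x) = x² (5x+3)(3x+1)`. For odd `x` this shows `v₂(T₃(x)) = v₂((5x+3)(3x+1)) - 2`, and for
`x ≡ 1 (mod 8)` the right-hand side is at least `3`, so `T₃(x) = yⁿ` forces `y` to be even and
hence `n ≤ n v₂(y) = v₂(T₃(x))`.
-/

lemma four_mul_sum_range_cube (m : ℕ) :
    4 * ∑ i ∈ Finset.range (m + 1), i ^ 3 = (m * (m + 1)) ^ 2 := by
  induction m with
  | zero => simp
  | succ m ih => rw [Finset.sum_range_succ, Nat.mul_add, ih]; ring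

lemma sum_range_cube_add_T_three (x : ℕ) :
    ∑ i ∈ Finset.range (x + 1), i ^ 3 + T 3 x = ∑ i ∈ Finset.range (2 * x + 1), i ^ 3 := by
  rw [T, ← Finset.Ico_add_one_right_eq_Icc, Finset.range_eq_Ico, Finset.range_eq_Ico]
  exact Finset.sum_Ico_consecutive _ (by omega) (by omega)

lemma four_mul_T_three (x : ℕ) : 4 * T 3 x = x ^ 2 * ((5 * x + 3) * (3 * x + 1)) := by
  have h : (x * (x + 1)) ^ 2 + 4 * T 3 x = (2 * x * (2 * x + 1)) ^ 2 := by
    rw [← four_mul_sum_range_cube, ← four_mul_sum_range_cube, ← sum_range_cube_add_T_three]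
    ring
  refine Nat.add_left_cancel (h.trans ?_)
  ring

lemma padicValNat_two_T_three_add_two {x : ℕ} (hx : x % 2 = 1) :
    padicValNat 2 (T 3 x) + 2 = padicValNat 2 ((5 * x + 3) * (3 * x + 1)) := by
  have hx0 : x ^ 2 ≠ 0 := pow_ne_zero 2 (by omega)
  have hP : (5 * x + 3) * (3 * x + 1) ≠ 0 := by positivity
  have hT : T 3 x ≠ 0 := fun h => by
    have := four_mul_T_three x
    simp_all
  have hvx : padicValNat 2 (x ^ 2) = 0 :=
    padicValNat.eq_zero_of_not_dvd fun h => by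
      have := Nat.prime_two.dvd_of_dvd_pow h; omega
  have h := congrArg (padicValNat 2) (four_mul_T_three x)
  rwa [show (4 : ℕ) = 2 ^ 2 by norm_num, padicValNat.mul (by norm_num) hT,
    padicValNat.mul hx0 hP, padicValNat.prime_pow, hvx, zero_add, add_comm] at h

lemma two_dvd_T_three {x : ℕ} (hx : x % 8 = 1) : 2 ∣ T 3 x := by
  obtain ⟨k, rfl⟩ : ∃ k, x = 8 * k + 1 := ⟨x / 8, by omega⟩
  have h := four_mul_T_three (8 * k + 1)
  exact ⟨4 * (8 * k + 1) ^ 2 * ((5 * k + 1) * (6 * k + 1)), by linarith⟩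

lemma le_padicValNat_of_dvd_pow {p y n : ℕ} [Fact p.Prime] (hy : y ≠ 0) (hdvd : p ∣ y ^ n) :
    n ≤ padicValNat p (y ^ n) := by
  have hv : 1 ≤ padicValNat p y :=
    one_le_padicValNat_of_dvd hy ((Fact.out : p.Prime).dvd_of_dvd_pow hdvd)
  rw [padicValNat.pow]
  exact Nat.le_mul_of_pos_right n hv

theorem stmt_4_general (x y n : ℕ) (hy : 0 < y)
    (heq : T 3 x = y ^ n) (hx8 : x % 8 = 1) :
    n ≤ padicValNat 2 ((5 * x + 3) * (3 * x + 1)) - 2 := by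
  have hval := padicValNat_two_T_three_add_two (x := x) (by omega)
  have hn := le_padicValNat_of_dvd_pow (p := 2) hy.ne' (heq ▸ two_dvd_T_three hx8)
  rw [← heq] at hn
  omega

theorem stmt_4 (x y n : ℕ) (hx : 0 < x) (hy : 0 < y) (hn : 0 < n)
    (heq : T 3 x = y ^ n) (hx8 : x % 8 = 1) (hx32 : x % 32 ≠ 1) :
    n ≤ padicValNat 2 ((5 * x + 3) * (3 * x + 1)) - 2 :=
  stmt_4_general x y n hy heq hx8
end

section
/- Let $x, k, y, n$ be positive integers satisfying $(x+1)^k + (x+2)^k + \cdots + (2x)^k = y^n$. If $x \equiv 4 \pmod{9}$ and $k \ge 2$ is even, then $n \le v_3(2x+1) - 1$. -/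
open Finset

def powerSum (k N : ℕ) : ℤ := ∑ i ∈ range N, (i : ℤ) ^ k

lemma sq_dvd_powerSum_mul_sub (k B c : ℕ) :
    (B : ℤ) ^ 2 ∣ powerSum k (B * c) - c * powerSum k B
      - k * B * (∑ j ∈ range c, (j : ℤ)) * powerSum (k - 1) B := by
  induction c with
  | zero => simp [powerSum]
  | succ c ih =>
    have hshift : (B : ℤ) ^ 2 ∣ ∑ i ∈ range B,
        (((i : ℤ) + B * c) ^ k - (i : ℤ) ^ (k - 1) * (B * c) * k - (i : ℤ) ^ k) :=
      dvd_sum fun i _ => (pow_dvd_pow_of_dvd (dvd_mul_right _ _) 2).trans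
        (sq_dvd_add_pow_sub_sub _ _ _)
    have hsplit : powerSum k (B * (c + 1)) = powerSum k (B * c)
        + ∑ i ∈ range B, ((i : ℤ) + B * c) ^ k := by
      rw [powerSum, powerSum, mul_add_one, sum_range_add]
      push_cast
      simp only [add_comm]
    rw [hsplit]
    convert Int.dvd_add ih hshift using 1
    simp only [powerSum, sum_range_succ, sum_sub_distrib, ← sum_mul]
    push_cast
    ring

lemma powerSum_mul_modEq (k M s : ℕ) : powerSum k (M * s) ≡ s * powerSum k M [ZMOD M] := by
  refine Int.ModEq.symm <| Int.modEq_iff_dvd.mpr ?_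
  have h := (dvd_pow_self (M : ℤ) two_ne_zero).trans (sq_dvd_powerSum_mul_sub k M s)
  have hlin : (M : ℤ) ∣ k * M * (∑ j ∈ range s, (j : ℤ)) * powerSum (k - 1) M :=
    ((dvd_mul_left _ _).mul_right _).mul_right _
  simpa using Int.dvd_add h hlin

lemma powerSum_mul_modEq_of_odd {k B p : ℕ} (hp : Odd p) (hpB : p ∣ B) :
    powerSum k (B * p) ≡ p * powerSum k B [ZMOD B * p] := by
  obtain ⟨m, rfl⟩ := hp
  have hgauss : ∑ j ∈ range (2 * m + 1), j = (2 * m + 1) * m := by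
    have := sum_range_id_mul_two (2 * m + 1)
    rw [Nat.add_sub_cancel] at this
    linarith
  refine Int.ModEq.symm <| Int.modEq_iff_dvd.mpr ?_
  have hsq : (B : ℤ) * (2 * m + 1 : ℕ) ∣ (B : ℤ) ^ 2 := by
    rw [sq]
    exact mul_dvd_mul_left _ (Int.natCast_dvd_natCast.mpr hpB)
  have h := hsq.trans (sq_dvd_powerSum_mul_sub k B (2 * m + 1))
  have hlin : (B : ℤ) * (2 * m + 1 : ℕ) ∣
      k * B * (∑ j ∈ range (2 * m + 1), (j : ℤ)) * powerSum (k - 1) B := by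
    rw [← Nat.cast_sum, hgauss]
    exact Dvd.intro (k * m * powerSum (k - 1) B) (by push_cast; ring)
  simpa using Int.dvd_add h hlin

lemma powerSum_prime_modEq {p k : ℕ} (hp : p.Prime) (hk : p - 1 ∣ k) (hk0 : k ≠ 0) :
    powerSum k p ≡ -1 [ZMOD p] := by
  have := Fact.mk hp
  rw [← ZMod.intCast_eq_intCast_iff, powerSum]
  have hunit : ∀ i ∈ range (p - 1), ((i + 1 : ℕ) : ZMod p) ^ k = 1 := by
    intro i hi
    obtain ⟨j, rfl⟩ := hk
    rw [pow_mul, ZMod.pow_card_sub_one_eq_one, one_pow]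
    rw [Ne, ZMod.natCast_eq_zero_iff]
    exact Nat.not_dvd_of_pos_of_lt i.succ_pos (by simp at hi; omega)
  have hrange : range p = range (p - 1 + 1) := by rw [Nat.sub_add_cancel hp.one_le]
  push_cast
  rw [hrange, sum_range_succ', sum_congr rfl hunit, Nat.cast_zero, zero_pow hk0, add_zero,
    sum_const, card_range, nsmul_one, Nat.cast_sub hp.one_le, ZMod.natCast_self, Nat.cast_one,
    zero_sub]

lemma powerSum_prime_pow_modEq {p k : ℕ} (hp : p.Prime) (hp_odd : Odd p) (hk : p - 1 ∣ k)
    (hk0 : k ≠ 0) (e : ℕ) : powerSum k (p ^ (e + 1)) ≡ -p ^ e [ZMOD p ^ (e + 1)] := by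
  induction e with
  | zero => simpa using powerSum_prime_modEq hp hk hk0
  | succ e ih =>
    have hstep : powerSum k (p ^ (e + 2)) ≡ p * powerSum k (p ^ (e + 1)) [ZMOD p ^ (e + 2)] := by
      simpa [pow_succ] using
        powerSum_mul_modEq_of_odd (k := k) hp_odd (dvd_pow_self p e.succ_ne_zero)
    have hlift : (p : ℤ) * powerSum k (p ^ (e + 1)) ≡ -p ^ (e + 1) [ZMOD p ^ (e + 2)] := by
      simpa [pow_succ'] using ih.mul_left' (c := p)
    exact hstep.trans hlift

lemma two_mul_T_modEq {k : ℕ} (hk : Even k) (hk0 : k ≠ 0) (x : ℕ) :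
    2 * (T k x : ℤ) ≡ powerSum k (2 * x + 1) [ZMOD 2 * x + 1] := by
  have hT : (T k x : ℤ) = ∑ i ∈ range x, ((x : ℤ) + 1 + i) ^ k := by
    rw [T, ← Ico_add_one_right_eq_Icc, sum_Ico_eq_sum_range,
      show 2 * x + 1 - (x + 1) = x by omega]
    push_cast
    rfl
  have hsplit : powerSum k (2 * x + 1) = ∑ i ∈ range x, ((i : ℤ) + 1) ^ k + T k x := by
    rw [hT, powerSum, show 2 * x + 1 = 1 + x + x by ring, sum_range_add, sum_range_add]
    push_cast
    simp [zero_pow hk0, add_comm]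
  rw [hsplit, two_mul (T k x : ℤ)]
  refine Int.ModEq.add_right _ ?_
  rw [hT, ← sum_range_reflect]
  refine Int.ModEq.sum fun i hi => ?_
  have hcast : ((x - 1 - i : ℕ) : ℤ) = x - 1 - i := by
    have := mem_range.mp hi
    omega
  have hneg : (x : ℤ) + 1 + (x - 1 - i : ℕ) ≡ -(i + 1) [ZMOD 2 * x + 1] :=
    Int.modEq_iff_dvd.mpr ⟨-1, by rw [hcast]; ring⟩
  rw [← hk.neg_pow (_ + 1)]
  exact hneg.pow k

lemma padicValNat_eq_of_natCast_eq_pow_mul {p a m : ℕ} [hp : Fact p.Prime] {u : ℤ}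
    (h : (a : ℤ) = p ^ m * u) (hu : ¬(p : ℤ) ∣ u) : padicValNat p a = m := by
  have hu' : ¬p ∣ u.natAbs := Int.ofNat_dvd_left.not.mp hu
  have ha : a = p ^ m * u.natAbs := by simpa [Int.natAbs_mul] using congrArg Int.natAbs h
  rw [ha, padicValNat_base_pow_mul hp.out.one_lt (by rintro h; simp [h] at hu'),
    padicValNat.eq_zero_of_not_dvd hu', zero_add]

theorem padicValNat_T {p k x : ℕ} (hp : p.Prime) (hp_odd : Odd p) (hk : p - 1 ∣ k) (hk0 : k ≠ 0)
    (hpx : p ∣ 2 * x + 1) : padicValNat p (T k x) = padicValNat p (2 * x + 1) - 1 := by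
  have := Fact.mk hp
  obtain ⟨v, t, ht, hxt⟩ := Nat.exists_eq_pow_mul_and_not_dvd (n := 2 * x + 1) (by omega) p
    hp.one_lt.ne'
  have hv : padicValNat p (2 * x + 1) = v := by
    rw [hxt, padicValNat_base_pow_mul hp.one_lt (by rintro rfl; simp at ht),
      padicValNat.eq_zero_of_not_dvd ht, zero_add]
  obtain ⟨e, rfl⟩ : ∃ e, v = e + 1 := by
    refine Nat.exists_eq_add_one.mpr (Nat.pos_of_ne_zero ?_)
    rintro rfl
    exact ht (by simpa [hxt] using hpx)
  have hkeven : Even k := even_iff_two_dvd.mpr ((Nat.Odd.sub_odd hp_odd odd_one).two_dvd.trans hk)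
  have hcong : 2 * (T k x : ℤ) ≡ -t * p ^ e [ZMOD p ^ (e + 1)] :=
    calc 2 * (T k x : ℤ) ≡ powerSum k (2 * x + 1) [ZMOD p ^ (e + 1)] :=
          (two_mul_T_modEq hkeven hk0 x).of_dvd ⟨t, by exact_mod_cast hxt⟩
      _ = powerSum k (p ^ (e + 1) * t) := by rw [hxt]
      _ ≡ t * powerSum k (p ^ (e + 1)) [ZMOD p ^ (e + 1)] := by
          simpa using powerSum_mul_modEq k (p ^ (e + 1)) t
      _ ≡ t * -p ^ e [ZMOD p ^ (e + 1)] := (powerSum_prime_pow_modEq hp hp_odd hk hk0 e).mul_left _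
      _ = -t * p ^ e := by ring
  obtain ⟨w, hw⟩ := Int.modEq_iff_dvd.mp hcong.symm
  have h2T : ((2 * T k x : ℕ) : ℤ) = p ^ e * (p * w - t) := by
    push_cast
    linear_combination hw
  have hu : ¬(p : ℤ) ∣ p * w - t := fun h =>
    ht (Int.natCast_dvd_natCast.mp ((dvd_sub_right (dvd_mul_right _ _)).mp h))
  have hT0 : T k x ≠ 0 := by
    intro h
    rw [h, mul_zero, Nat.cast_zero, eq_comm, mul_eq_zero] at h2T
    exact hu (h2T.resolve_left (pow_ne_zero _ (by exact_mod_cast hp.ne_zero)) ▸ dvd_zero _)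
  have hp_two : ¬p ∣ 2 := fun h => by
    rw [(Nat.prime_dvd_prime_iff_eq hp Nat.prime_two).mp h] at hp_odd
    exact Nat.not_even_iff_odd.mpr hp_odd even_two
  rw [hv, Nat.add_sub_cancel, ← padicValNat_eq_of_natCast_eq_pow_mul h2T hu,
    padicValNat.mul two_ne_zero hT0, padicValNat.eq_zero_of_not_dvd hp_two, zero_add]

theorem stmt_8_general (x k y n : ℕ)
    (heq : T k x = y ^ n) (hx9 : x % 9 = 4) (hk2 : 2 ≤ k) (hkeven : Even k) :
    n ≤ padicValNat 3 (2 * x + 1) - 1 := by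
  have := Fact.mk Nat.prime_three
  have h9 : 3 ^ 2 ∣ 2 * x + 1 := Nat.dvd_of_mod_eq_zero (by omega)
  have hv : 2 ≤ padicValNat 3 (2 * x + 1) := (padicValNat_dvd_iff_le (by omega)).mp h9
  have hval : n * padicValNat 3 y = padicValNat 3 (2 * x + 1) - 1 := by
    rw [← padicValNat.pow y n, ← heq]
    exact padicValNat_T Nat.prime_three ⟨1, rfl⟩ (even_iff_two_dvd.mp hkeven) (by omega)
      ((dvd_pow_self 3 two_ne_zero).trans h9)
  have hy3 : 1 ≤ padicValNat 3 y := Nat.pos_of_ne_zero fun h => by simp [h] at hval; omega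
  calc n ≤ n * padicValNat 3 y := Nat.le_mul_of_pos_right n hy3
    _ = padicValNat 3 (2 * x + 1) - 1 := hval

theorem stmt_8 (x k y n : ℕ) (hx : 0 < x) (hy : 0 < y) (hn : 0 < n)
    (heq : T k x = y ^ n) (hx9 : x % 9 = 4) (hk2 : 2 ≤ k) (hkeven : Even k) :
    n ≤ padicValNat 3 (2 * x + 1) - 1 :=
  stmt_8_general x k y n heq hx9 hk2 hkeven
end

section
/- There are no positive integers $x, k, y, n$ with $n \ge 2$ satisfying $(x+1)^k + (x+2)^k + \cdots + (2x)^k = y^n$ in either of the following situations: (a) $x \equiv 1 \pmod{8}$ or $x \equiv 4 \pmod{8}$, and $k = 1$; (b) $x \equiv 4 \pmod{8}$ or $x \equiv 5 \pmod{8}$, and $k \ge 2$ is even. -/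
open Finset

lemma pow_mod_four_ne_two {y n : ℕ} (hn : 2 ≤ n) : y ^ n % 4 ≠ 2 := by
  rcases Nat.even_or_odd y with ⟨a, rfl⟩ | hodd
  · have : 4 ∣ (a + a) ^ n := dvd_trans ⟨a ^ 2, by ring⟩ (pow_dvd_pow (a + a) hn)
    omega
  · have := Nat.odd_iff.mp (hodd.pow (n := n))
    omega

lemma pow_mod_four_of_even {i k : ℕ} (hk : k ≠ 0) (hke : Even k) : i ^ k % 4 = i % 2 := by
  obtain ⟨j, rfl⟩ := hke
  have hj : j ≠ 0 := by omega
  rw [← two_mul, pow_mul, Nat.pow_mod]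
  rcases Nat.even_or_odd' i with ⟨a, rfl | rfl⟩
  · rw [show (2 * a) ^ 2 % 4 = 0 by ring_nf; omega, zero_pow hj]
    omega
  · rw [show (2 * a + 1) ^ 2 % 4 = 1 by ring_nf; omega, one_pow]
    omega

lemma sum_Ico_mod_two {m n : ℕ} (h : m ≤ n) : ∑ i ∈ Ico m n, i % 2 = n / 2 - m / 2 := by
  induction n, h using Nat.le_induction with
  | base => simp
  | succ n hmn ih => rw [sum_Ico_succ_top hmn, ih]; omega

lemma T_eq_sum_Ico (k x : ℕ) : T k x = ∑ i ∈ Ico (x + 1) (2 * x + 1), i ^ k := by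
  rw [T, Ico_add_one_right_eq_Icc]

lemma T_mod_four_of_even {k : ℕ} (x : ℕ) (hk : k ≠ 0) (hke : Even k) :
    T k x % 4 = x / 2 % 4 := by
  rw [T_eq_sum_Ico, sum_nat_mod, sum_congr rfl fun i _ => pow_mod_four_of_even hk hke,
    sum_Ico_mod_two (by omega)]
  omega

lemma two_mul_T_one (x : ℕ) : 2 * T 1 x = x * (3 * x + 1) := by
  have hsplit := sum_range_add_sum_Ico (fun i => i) (show x + 1 ≤ 2 * x + 1 by omega)
  have gauss_x := sum_range_id_mul_two (x + 1)
  have gauss_2x := sum_range_id_mul_two (2 * x + 1)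
  simp only [T_eq_sum_Ico, pow_one, Nat.add_sub_cancel] at *
  nlinarith

lemma T_one_mod_four {x : ℕ} (hx : x % 8 = 1 ∨ x % 8 = 4) : T 1 x % 4 = 2 := by
  have h8 : x * (3 * x + 1) % 8 = 4 := by
    rcases hx with h | h <;> simp [Nat.mul_mod, Nat.add_mod, h]
  have := two_mul_T_one x
  omega

theorem stmt_9_general (x k y n : ℕ) (hn : 2 ≤ n)
    (h : ((x % 8 = 1 ∨ x % 8 = 4) ∧ k = 1) ∨
         ((x % 8 = 4 ∨ x % 8 = 5) ∧ 2 ≤ k ∧ Even k)) :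
    T k x ≠ y ^ n := by
  have hT : T k x % 4 = 2 := by
    rcases h with ⟨hx, rfl⟩ | ⟨hx, hk, hke⟩
    · exact T_one_mod_four hx
    · rw [T_mod_four_of_even x (by omega) hke]
      omega
  exact fun heq => pow_mod_four_ne_two hn (heq ▸ hT)

theorem stmt_9 (x k y n : ℕ) (hx : 0 < x) (hk : 0 < k) (hy : 0 < y) (hn : 2 ≤ n)
    (h : ((x % 8 = 1 ∨ x % 8 = 4) ∧ k = 1) ∨
         ((x % 8 = 4 ∨ x % 8 = 5) ∧ 2 ≤ k ∧ Even k)) :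
    T k x ≠ y ^ n :=
  stmt_9_general x k y n hn h
end

section
/- For every positive integer $x$, $(x+1) + (x+2) + \cdots + (2x) = \frac{x(3x+1)}{2}$. Moreover: (i) for every even integer $k \ge 2$ there exist a positive integer $D_k$ and a polynomial $M_k(X)$ with integer coefficients such that $D_k \cdot \big((x+1)^k + \cdots + (2x)^k\big) = x(2x+1) M_k(x)$ for all positive integers $x$; (ii) for every odd integer $k > 1$ there exist a positive integer $D_k$ and a polynomial $M_k(X)$ with integer coefficients such that $D_k \cdot \big((x+1)^k + \cdots + (2x)^k\big) = x^2(3x+1) M_k(x)$ for all positive integers $x$. -/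
open Polynomial Finset

lemma T_eq_sum_range_sub (k x : ℕ) : (T k x : ℚ) =
    ∑ j ∈ range (2 * x + 1), (j : ℚ) ^ k - ∑ j ∈ range (x + 1), (j : ℚ) ^ k := by
  rw [eq_sub_iff_add_eq', T, range_eq_Ico, range_eq_Ico, ← Ico_add_one_right_eq_Icc]
  push_cast
  exact sum_Ico_consecutive _ (by omega) (by omega)

lemma T_one (x : ℕ) : (T 1 x : ℚ) = x * (3 * x + 1) / 2 := by
  rw [T_eq_sum_range_sub, sum_range_pow, sum_range_pow]
  norm_num [sum_range_succ]
  ring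

noncomputable def polyT (k : ℕ) : ℚ[X] :=
  (Polynomial.bernoulli (k + 1)).comp (2 * X + 1) - (Polynomial.bernoulli (k + 1)).comp (X + 1)

lemma polyT_eval_natCast (k x : ℕ) : (polyT k).eval (x : ℚ) = (k + 1) * T k x := by
  have h₁ := sum_range_pow_eq_bernoulli_sub (2 * x + 1) k
  have h₂ := sum_range_pow_eq_bernoulli_sub (x + 1) k
  push_cast [Nat.succ_eq_add_one] at h₁ h₂
  simp only [polyT, eval_sub, eval_comp, eval_add, eval_mul, eval_X, eval_one, eval_ofNat]
  rw [T_eq_sum_range_sub]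
  linear_combination h₂ - h₁

lemma polyT_eval_zero (k : ℕ) : (polyT k).eval 0 = 0 := by
  simp [polyT]

lemma polyT_eval_neg_half {k : ℕ} (hk : k ≠ 0) (he : Even k) :
    (polyT k).eval (-2⁻¹) = 0 := by
  have h := bernoulli_eval_one_sub (k + 1) (1 / 2)
  rw [(he.add_one).neg_one_pow] at h
  have h0 := bernoulli_eq_zero_of_odd he.add_one (by omega)
  simp only [polyT, eval_sub, eval_comp, eval_add, eval_mul, eval_X, eval_one, eval_ofNat]
  norm_num [bernoulli_eval_zero, h0] at h ⊢
  linarith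

lemma polyT_eval_neg_third {k : ℕ} (ho : Odd k) : (polyT k).eval (-3⁻¹) = 0 := by
  have h := bernoulli_eval_one_sub (k + 1) (1 / 3)
  rw [(ho.add_one).neg_one_pow, one_mul] at h
  simp only [polyT, eval_sub, eval_comp, eval_add, eval_mul, eval_X, eval_one, eval_ofNat]
  norm_num at h ⊢
  linarith

lemma derivative_polyT_eval_zero {k : ℕ} (hk : 1 < k) (ho : Odd k) :
    (derivative (polyT k)).eval 0 = 0 := by
  simp [polyT, derivative_comp, derivative_bernoulli, bernoulli_eval_one,
    bernoulli'_eq_zero_of_odd ho hk]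

lemma X_sq_dvd_of_eval_zero_of_derivative_eval_zero {R : Type*} [CommRing R] {p : R[X]}
    (h₀ : p.eval 0 = 0) (h₁ : (derivative p).eval 0 = 0) : X ^ 2 ∣ p := by
  rw [X_pow_dvd_iff]
  intro d hd
  interval_cases d
  · rwa [coeff_zero_eq_eval_zero]
  · simpa [← coeff_zero_eq_eval_zero, coeff_derivative] using h₁

lemma C_mul_X_add_one_dvd_of_eval_neg_inv {K : Type*} [Field K] {p : K[X]} {a : K} (ha : a ≠ 0)
    (h : p.eval (-a⁻¹) = 0) : C a * X + 1 ∣ p := by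
  obtain ⟨r, rfl⟩ := dvd_iff_isRoot.2 h
  rw [show C a * X + 1 = C a * (X - C (-a⁻¹)) by simp [mul_add, ← C_mul, ha]]
  exact (isUnit_C.2 ha.isUnit).mul_left_dvd.2 (dvd_mul_right _ _)

lemma X_mul_two_X_add_one_dvd_polyT {k : ℕ} (hk : k ≠ 0) (he : Even k) :
    X * (2 * X + 1) ∣ polyT k := by
  have hX : X ∣ polyT k := by simpa using dvd_iff_isRoot.2 (polyT_eval_zero k)
  have hlin : 2 * X + 1 ∣ polyT k := by
    simpa [C_ofNat] using
      C_mul_X_add_one_dvd_of_eval_neg_inv (by norm_num) (polyT_eval_neg_half hk he)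
  exact IsCoprime.mul_dvd ⟨-2, 1, by ring⟩ hX hlin

lemma X_sq_mul_three_X_add_one_dvd_polyT {k : ℕ} (hk : 1 < k) (ho : Odd k) :
    X ^ 2 * (3 * X + 1) ∣ polyT k := by
  have hX : X ^ 2 ∣ polyT k :=
    X_sq_dvd_of_eval_zero_of_derivative_eval_zero (polyT_eval_zero k)
      (derivative_polyT_eval_zero hk ho)
  have hlin : 3 * X + 1 ∣ polyT k := by
    simpa [C_ofNat] using
      C_mul_X_add_one_dvd_of_eval_neg_inv (by norm_num) (polyT_eval_neg_third ho)
  exact IsCoprime.mul_dvd ⟨9, 1 - 3 * X, by ring⟩ hX hlin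

lemma exists_map_eq_nat_smul (r : ℚ[X]) :
    ∃ D : ℕ, 0 < D ∧ ∃ M : ℤ[X], M.map (Int.castRingHom ℚ) = (D : ℚ) • r := by
  obtain ⟨b, hb, hN⟩ := IsLocalization.integerNormalization_spec (nonZeroDivisors ℤ) r
  refine ⟨b.natAbs, Int.natAbs_pos.2 (nonZeroDivisors.ne_zero hb),
    C b.sign * IsLocalization.integerNormalization (nonZeroDivisors ℤ) r, ?_⟩
  rw [Polynomial.map_mul, map_C, show algebraMap ℤ ℚ = Int.castRingHom ℚ from rfl] at *
  rw [hN, ← smul_eq_C_mul, ← Int.cast_smul_eq_zsmul ℚ b r, smul_smul, eq_intCast,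
    ← Int.cast_mul, Int.sign_mul_self_eq_natAbs, Int.cast_natCast]

lemma exists_nat_mul_eval_eq_of_map_dvd {q : ℚ[X]} {g : ℤ[X]}
    (h : g.map (Int.castRingHom ℚ) ∣ q) : ∃ D : ℕ, 0 < D ∧ ∃ M : ℤ[X],
      ∀ x : ℤ, (D : ℚ) * q.eval (x : ℚ) = ((g.eval x * M.eval x : ℤ) : ℚ) := by
  obtain ⟨r, rfl⟩ := h
  obtain ⟨D, hD, M, hM⟩ := exists_map_eq_nat_smul r
  refine ⟨D, hD, M, fun x => ?_⟩
  have hMx := congrArg (eval (x : ℚ)) hM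
  rw [eval_intCast_map, eval_smul, smul_eq_mul, eq_intCast, Int.cast_id] at hMx
  rw [eval_mul, eval_intCast_map, eq_intCast, Int.cast_id, Int.cast_mul, hMx]
  ring

lemma exists_nat_mul_T_eq_of_map_dvd {k : ℕ} {g : ℤ[X]}
    (h : g.map (Int.castRingHom ℚ) ∣ polyT k) : ∃ D : ℕ, 0 < D ∧ ∃ M : ℤ[X],
      ∀ x : ℕ, (D : ℤ) * T k x = g.eval (x : ℤ) * M.eval (x : ℤ) := by
  obtain ⟨D, hD, M, hM⟩ := exists_nat_mul_eval_eq_of_map_dvd h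
  refine ⟨D * (k + 1), by positivity, M, fun x => ?_⟩
  have hx := hM x
  rw [Int.cast_natCast, polyT_eval_natCast] at hx
  have hx' : ((D * (k + 1) * T k x : ℕ) : ℚ) =
      ((g.eval (x : ℤ) * M.eval (x : ℤ) : ℤ) : ℚ) := by
    rw [← hx]; push_cast; ring
  exact_mod_cast hx'

theorem stmt_12 :
    (∀ x : ℕ, 0 < x → (T 1 x : ℚ) = (x * (3 * x + 1)) / 2) ∧
    (∀ k : ℕ, 2 ≤ k → Even k → ∃ D : ℕ, 0 < D ∧ ∃ M : Polynomial ℤ,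
      ∀ x : ℕ, 0 < x →
        (D : ℤ) * (T k x : ℤ) = (x : ℤ) * (2 * (x : ℤ) + 1) * M.eval (x : ℤ)) ∧
    (∀ k : ℕ, 1 < k → Odd k → ∃ D : ℕ, 0 < D ∧ ∃ M : Polynomial ℤ,
      ∀ x : ℕ, 0 < x →
        (D : ℤ) * (T k x : ℤ) = (x : ℤ) ^ 2 * (3 * (x : ℤ) + 1) * M.eval (x : ℤ)) := by
  refine ⟨fun x _ => T_one x, fun k hk he => ?_, fun k hk ho => ?_⟩
  · obtain ⟨D, hD, M, hM⟩ := exists_nat_mul_T_eq_of_map_dvd (g := X * (2 * X + 1))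
      (by simpa using X_mul_two_X_add_one_dvd_polyT (by omega) he)
    exact ⟨D, hD, M, fun x _ => by simpa using hM x⟩
  · obtain ⟨D, hD, M, hM⟩ := exists_nat_mul_T_eq_of_map_dvd (g := X ^ 2 * (3 * X + 1))
      (by simpa using X_sq_mul_three_X_add_one_dvd_polyT hk ho)
    exact ⟨D, hD, M, fun x _ => by simpa using hM x⟩
end

section
/- Let $p$ be a prime, let $d, q$ be nonnegative integers, let $k$ be a positive integer, and let $m_1, m_2$ be nonnegative integers each of which is either $0$ or divisible by $p^d$. Then $S_k(q m_1 + m_2) \equiv q\, S_k(m_1) + S_k(m_2) \pmod{p^d}$. -/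
/-- `S k x = 1^k + 2^k + ... + x^k` (with `S k 0 = 0`). -/
def S (k x : ℕ) : ℕ := ∑ i ∈ Finset.Icc 1 x, i ^ k

lemma S_zero_right (k : ℕ) : S k 0 = 0 := rfl

lemma S_succ (k x : ℕ) : S k (x + 1) = S k x + (x + 1) ^ k :=
  Finset.sum_Icc_succ_top (by omega) _

lemma S_add_modEq_of_dvd {n x : ℕ} (k m : ℕ) (hx : n ∣ x) :
    S k (x + m) ≡ S k x + S k m [MOD n] := by
  induction m with
  | zero => rw [S_zero_right, add_zero, add_zero]
  | succ m ih =>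
    have hpow : (x + m + 1) ^ k ≡ (m + 1) ^ k [MOD n] := by
      have hshift : x + (m + 1) ≡ 0 + (m + 1) [MOD n] :=
        (Nat.modEq_zero_iff_dvd.2 hx).add_right _
      simpa only [add_assoc, zero_add] using hshift.pow k
    rw [← add_assoc, S_succ, S_succ, ← add_assoc]
    exact ih.add hpow

lemma S_mul_add_modEq_of_dvd {n a b : ℕ} (k q : ℕ) (ha : n ∣ a) (hb : n ∣ b) :
    S k (q * a + b) ≡ q * S k a + S k b [MOD n] := by
  induction q with
  | zero => simp only [zero_mul, zero_add]; rfl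
  | succ q ih =>
    calc S k ((q + 1) * a + b) = S k ((q * a + b) + a) := by ring_nf
      _ ≡ S k (q * a + b) + S k a [MOD n] :=
        S_add_modEq_of_dvd k a ((ha.mul_left q).add hb)
      _ ≡ (q * S k a + S k b) + S k a [MOD n] := ih.add_right _
      _ = (q + 1) * S k a + S k b := by ring

theorem stmt_13_general (p : ℕ) (d q k : ℕ) (m₁ m₂ : ℕ)
    (hm₁ : m₁ = 0 ∨ p ^ d ∣ m₁) (hm₂ : m₂ = 0 ∨ p ^ d ∣ m₂) :
    S k (q * m₁ + m₂) ≡ q * S k m₁ + S k m₂ [MOD p ^ d] := by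
  have hdvd : ∀ m, m = 0 ∨ p ^ d ∣ m → p ^ d ∣ m := by
    rintro m (rfl | h)
    exacts [dvd_zero _, h]
  exact S_mul_add_modEq_of_dvd k q (hdvd m₁ hm₁) (hdvd m₂ hm₂)

theorem stmt_13 (p : ℕ) (hp : p.Prime) (d q k : ℕ) (hk : 0 < k) (m₁ m₂ : ℕ)
    (hm₁ : m₁ = 0 ∨ p ^ d ∣ m₁) (hm₂ : m₂ = 0 ∨ p ^ d ∣ m₂) :
    S k (q * m₁ + m₂) ≡ q * S k m₁ + S k m₂ [MOD p ^ d] :=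
  stmt_13_general p d q k m₁ m₂ hm₁ hm₂
end

section
/- Let $q, k, t$ be positive integers with $q$ odd. If $k = 1$ or $k$ is even, then $v_2(T_k(2^t q)) = t - 1$; if $k \ge 3$ is odd, then $v_2(T_k(2^t q)) = 2t - 2$. -/
/-!
Write `x = 2^t q`. Since `i ↦ i^k` is periodic modulo `2^t`, `T_k(x) ≡ q · ∑_{i < 2^t} i^k`
modulo `2^t`. For `k = 1` or `k` even the power sum over a full period satisfies
`∑_{i < 2h} i^k ≡ 2 ∑_{i < h} i^k (mod 2h)` for even `h`, hence equals `2^(t-1)` modulo `2^t`.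

For odd `k ≥ 3` one needs a finer congruence: pairing `i` with `3x - i` on
`x < i < 2x`, the binomial theorem gives `i^k + (3x - i)^k ≡ 3xk · i^(k-1) (mod 9x²)`, so
`2 T_k(x) ≡ 3xk · T_{k-1}(x) (mod 2^(2t))`, and the even case for `k - 1` finishes the proof.
-/

open Finset Function

namespace Function.Periodic

variable {M : Type*} [AddCancelCommMonoid M] {f : ℕ → M} {n : ℕ}

theorem sum_range_comp_add (hf : Periodic f n) (b : ℕ) :
    ∑ i ∈ range n, f (b + i) = ∑ i ∈ range n, f i := by
  induction b with
  | zero => simp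
  | succ b ih =>
    refine add_right_cancel (b := f b) ?_
    calc ∑ i ∈ range n, f (b + 1 + i) + f b = ∑ i ∈ range (n + 1), f (b + i) := by
          simp only [sum_range_succ', add_zero, add_assoc, add_comm 1]
      _ = ∑ i ∈ range n, f i + f b := by rw [sum_range_succ, hf b, ih]

theorem sum_range_mul (hf : Periodic f n) (m : ℕ) :
    ∑ i ∈ range (m * n), f i = m • ∑ i ∈ range n, f i := by
  induction m with
  | zero => simp
  | succ m ih => rw [add_mul, one_mul, sum_range_add, ih, hf.sum_range_comp_add, succ_nsmul]

theorem sum_Ico_add_mul (hf : Periodic f n) (a m : ℕ) :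
    ∑ i ∈ Ico a (a + m * n), f i = m • ∑ i ∈ range n, f i := by
  have hmn : Periodic f (m * n) := by simpa using hf.nat_mul m
  rw [sum_Ico_eq_sum_range, Nat.add_sub_cancel_left, hmn.sum_range_comp_add, hf.sum_range_mul]

end Function.Periodic

theorem Finset.sum_Ioo_reflect {M : Type*} [AddCommMonoid M] (f : ℕ → M) (a b : ℕ) :
    ∑ i ∈ Ioo a b, f (a + b - i) = ∑ i ∈ Ioo a b, f i :=
  sum_nbij' (fun i => a + b - i) (fun i => a + b - i) (by simp; omega) (by simp; omega)
    (by simp; omega) (by simp; omega) (fun _ _ => rfl)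

theorem Odd.sq_dvd_pow_add_sub_pow_sub {R : Type*} [CommRing R] {k : ℕ} (hk : Odd k)
    (a c : R) :
    c ^ 2 ∣ a ^ k + (c - a) ^ k - c * k * a ^ (k - 1) := by
  have h := sq_dvd_add_pow_sub_sub c (-a) k
  rw [hk.neg_pow, (Nat.Odd.sub_odd hk odd_one).neg_pow] at h
  convert h using 1
  ring

theorem Nat.add_pow_modEq_of_even {h k : ℕ} (hh : Even h) (hk : Even k) (r : ℕ) :
    (r + h) ^ k ≡ r ^ k [MOD 2 * h] := by
  obtain ⟨c, rfl⟩ := hh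
  obtain ⟨m, rfl⟩ := hk
  rw [← two_mul m, pow_mul, pow_mul]
  refine Nat.ModEq.pow m ?_
  rw [show (r + (c + c)) ^ 2 = r ^ 2 + 2 * (c + c) * (r + c) by ring]
  exact Nat.add_mul_mod_self_left _ _ _

theorem Odd.mul_two_pow_modEq_s15 {q : ℕ} (hq : Odd q) (N : ℕ) :
    q * 2 ^ N ≡ 2 ^ N [MOD 2 ^ (N + 1)] := by
  obtain ⟨c, rfl⟩ := hq
  rw [show (2 * c + 1) * 2 ^ N = 2 ^ N + 2 ^ (N + 1) * c by ring]
  exact Nat.add_mul_mod_self_left _ _ _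

theorem padicValNat_two_eq_of_modEq {m N : ℕ} (h : m ≡ 2 ^ N [MOD 2 ^ (N + 1)]) :
    padicValNat 2 m = N := by
  have hmod : m % 2 ^ (N + 1) = 2 ^ N :=
    Eq.trans h (Nat.mod_eq_of_lt (Nat.pow_lt_pow_right one_lt_two N.lt_succ_self))
  obtain ⟨c, rfl⟩ : ∃ c, m = 2 ^ N * (2 * c + 1) := ⟨m / 2 ^ (N + 1), by
    conv_lhs => rw [← Nat.div_add_mod m (2 ^ (N + 1)), hmod]
    ring⟩
  rw [padicValNat.mul (by positivity) (by omega), padicValNat.prime_pow,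
    padicValNat.eq_zero_of_not_dvd (by omega), add_zero]

theorem T_modEq_mul_sum_range (k n m : ℕ) :
    T k (n * m) ≡ m * ∑ i ∈ range n, i ^ k [MOD n] := by
  have hf : Periodic (fun i : ℕ => (i : ZMod n) ^ k) n := fun i => by simp
  rw [← ZMod.natCast_eq_natCast_iff]
  have hI : Icc (n * m + 1) (2 * (n * m)) = Ico (n * m + 1) (n * m + 1 + m * n) := by
    rw [← Ico_add_one_right_eq_Icc]; congr 1; ring
  push_cast [T, hI]
  rw [hf.sum_Ico_add_mul, nsmul_eq_mul]

theorem sum_range_two_mul_pow_modEq {h k : ℕ} (hh : Even h) (hk : k = 1 ∨ Even k) :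
    ∑ i ∈ range (2 * h), i ^ k ≡ 2 * ∑ i ∈ range h, i ^ k [MOD 2 * h] := by
  have hsplit :
      ∑ i ∈ range (2 * h), i ^ k
        = ∑ i ∈ range h, i ^ k + ∑ i ∈ range h, (h + i) ^ k := by
    rw [two_mul, sum_range_add]
  rw [hsplit, two_mul (∑ i ∈ range h, i ^ k)]
  refine Nat.ModEq.add_left _ ?_
  rcases hk with rfl | hk
  · obtain ⟨c, hc⟩ := hh
    simp only [pow_one]
    rw [sum_add_distrib, sum_const, card_range, smul_eq_mul,
      show h * h = 2 * h * c by rw [hc]; ring, add_comm]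
    exact Nat.add_mul_mod_self_left _ _ _
  · exact Nat.ModEq.sum fun i _ => by rw [add_comm]; exact Nat.add_pow_modEq_of_even hh hk i

theorem sum_range_two_pow_modEq_s15 {k : ℕ} (hk₀ : k ≠ 0) (hk : k = 1 ∨ Even k) :
    ∀ N : ℕ, ∑ i ∈ range (2 ^ (N + 1)), i ^ k ≡ 2 ^ N [MOD 2 ^ (N + 1)]
  | 0 => by simp [sum_range_succ, hk₀]; rfl
  | N + 1 => by
    rw [pow_succ' 2 (N + 1)]
    calc ∑ i ∈ range (2 * 2 ^ (N + 1)), i ^ k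
        ≡ 2 * ∑ i ∈ range (2 ^ (N + 1)), i ^ k [MOD 2 * 2 ^ (N + 1)] :=
          sum_range_two_mul_pow_modEq (Nat.even_pow.mpr ⟨even_two, N.succ_ne_zero⟩) hk
      _ ≡ 2 * 2 ^ N [MOD 2 * 2 ^ (N + 1)] := (sum_range_two_pow_modEq_s15 hk₀ hk N).mul_left' 2
      _ = 2 ^ (N + 1) := (pow_succ' 2 N).symm

theorem T_two_pow_mul_modEq {k : ℕ} (hk₀ : k ≠ 0) (hk : k = 1 ∨ Even k) (N q : ℕ) :
    T k (2 ^ (N + 1) * q) ≡ q * 2 ^ N [MOD 2 ^ (N + 1)] :=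
  (T_modEq_mul_sum_range k _ q).trans ((sum_range_two_pow_modEq_s15 hk₀ hk N).mul_left q)

theorem T_eq_sum_Ioo_add {k : ℕ} (hk : k ≠ 0) (x : ℕ) :
    T k x = ∑ i ∈ Ioo x (2 * x), i ^ k + (2 * x) ^ k := by
  rcases x.eq_zero_or_pos with rfl | hx
  · simp [T, hk]
  rw [T, Icc_add_one_left_eq_Ioc, ← Ioo_insert_right (by omega), sum_insert (by simp), add_comm]

theorem sq_dvd_two_mul_sum_Ioo_pow_sub {k : ℕ} (hk : Odd k) (x : ℕ) :
    (3 * x : ℤ) ^ 2 ∣ 2 * ∑ i ∈ Ioo x (2 * x), (i : ℤ) ^ k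
      - 3 * x * k * ∑ i ∈ Ioo x (2 * x), (i : ℤ) ^ (k - 1) := by
  have hreflect :
      ∑ i ∈ Ioo x (2 * x), ((3 * x : ℤ) - i) ^ k
        = ∑ i ∈ Ioo x (2 * x), (i : ℤ) ^ k := by
    rw [← sum_Ioo_reflect (fun i : ℕ => (i : ℤ) ^ k)]
    refine sum_congr rfl fun i hi => ?_
    rw [mem_Ioo] at hi
    push_cast [show i ≤ x + 2 * x by omega]
    ring
  have hpair :
      2 * ∑ i ∈ Ioo x (2 * x), (i : ℤ) ^ k
          - 3 * x * k * ∑ i ∈ Ioo x (2 * x), (i : ℤ) ^ (k - 1)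
        = ∑ i ∈ Ioo x (2 * x), ((i : ℤ) ^ k + (3 * x - i) ^ k - 3 * x * k * i ^ (k - 1)) := by
    rw [sum_sub_distrib, sum_add_distrib, hreflect, ← two_mul, ← mul_sum]
  rw [hpair]
  exact dvd_sum fun i _ => hk.sq_dvd_pow_add_sub_pow_sub _ _

theorem sum_Ioo_two_pow_mul_pow_modEq {j : ℕ} (hj₀ : j ≠ 0) (hj : Even j) (N q : ℕ) :
    ∑ i ∈ Ioo (2 ^ (N + 1) * q) (2 * (2 ^ (N + 1) * q)), i ^ j
      ≡ q * 2 ^ N [MOD 2 ^ (N + 1)] := by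
  have htop : (2 * (2 ^ (N + 1) * q)) ^ j ≡ 0 [MOD 2 ^ (N + 1)] :=
    Nat.modEq_zero_iff_dvd.mpr (dvd_pow ((dvd_mul_right _ _).mul_left 2) hj₀)
  refine Nat.ModEq.add_right_cancel htop ?_
  rw [← T_eq_sum_Ioo_add hj₀, add_zero]
  exact T_two_pow_mul_modEq hj₀ (Or.inr hj) N q

theorem T_two_pow_mul_modEq_of_odd {k : ℕ} (hk₃ : 3 ≤ k) (hk : Odd k) (N q : ℕ) :
    T k (2 ^ (N + 1) * q) ≡ 3 * k * q ^ 2 * 2 ^ (2 * N) [MOD 2 ^ (2 * N + 1)] := by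
  have hpred := sum_Ioo_two_pow_mul_pow_modEq (by omega) (Nat.Odd.sub_odd hk odd_one) N q
  obtain ⟨x, hx⟩ : ∃ x, 2 ^ (N + 1) * q = x := ⟨_, rfl⟩
  have hxZ : (x : ℤ) = 2 ^ (N + 1) * q := by rw [← hx]; push_cast; ring
  rw [hx] at hpred
  rw [hx, ← Nat.ModEq.mul_left_cancel_iff' two_ne_zero, ← Int.natCast_modEq_iff,
    Int.modEq_iff_dvd, T_eq_sum_Ioo_add (by omega)]
  replace hpred := (Int.natCast_modEq_iff.mpr hpred).dvd
  have hpair := sq_dvd_two_mul_sum_Ioo_pow_sub hk x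
  push_cast at hpred hpair ⊢
  set S := ∑ i ∈ Ioo x (2 * x), (i : ℤ) ^ k
  set S' := ∑ i ∈ Ioo x (2 * x), (i : ℤ) ^ (k - 1)
  have hsq : (2 : ℤ) ^ (2 * N + 2) ∣ (3 * x) ^ 2 := ⟨9 * q ^ 2, by rw [hxZ]; ring⟩
  have hmid : (2 : ℤ) ^ (2 * N + 2) ∣ 3 * x * k * (q * 2 ^ N - S') := by
    rw [show (3 * x * k : ℤ) = 2 ^ (N + 1) * (3 * q * k) by rw [hxZ]; ring,
      show (2 : ℤ) ^ (2 * N + 2) = 2 ^ (N + 1) * 2 ^ (N + 1) by ring, mul_assoc]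
    exact mul_dvd_mul_left _ (hpred.mul_left _)
  have htop : (2 : ℤ) ^ (2 * N + 2) ∣ (2 * x) ^ k := by
    rw [show 2 * N + 2 = (N + 1) * 2 by ring, pow_mul]
    have h2x : (2 : ℤ) ^ (N + 1) ∣ 2 * x := ⟨2 * q, by rw [hxZ]; ring⟩
    exact (pow_dvd_pow_of_dvd h2x 2).trans (pow_dvd_pow _ (by omega))
  have e : 2 * (3 * k * q ^ 2 * 2 ^ (2 * N)) - 2 * (S + (2 * x) ^ k)
      = 3 * x * k * (q * 2 ^ N - S') - (2 * S - 3 * x * k * S') - 2 * (2 * x) ^ k := by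
    rw [hxZ]; ring
  rw [e, show (2 : ℤ) * 2 ^ (2 * N + 1) = 2 ^ (2 * N + 2) by ring]
  exact (hmid.sub (hsq.trans hpair)).sub (htop.mul_left 2)

theorem stmt_15_general (q k t : ℕ) (hk : 0 < k) (ht : 0 < t) (hqodd : Odd q) :
    ((k = 1 ∨ Even k) → padicValNat 2 (T k (2 ^ t * q)) = t - 1) ∧
    (3 ≤ k → Odd k → padicValNat 2 (T k (2 ^ t * q)) = 2 * t - 2) := by
  obtain ⟨N, rfl⟩ : ∃ N, t = N + 1 := ⟨t - 1, by omega⟩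
  refine ⟨fun hk' => ?_, fun hk₃ hkodd => ?_⟩
  · rw [Nat.add_sub_cancel]
    exact padicValNat_two_eq_of_modEq
      ((T_two_pow_mul_modEq hk.ne' hk' N q).trans (hqodd.mul_two_pow_modEq_s15 N))
  · rw [show 2 * (N + 1) - 2 = 2 * N by omega]
    have hodd : Odd (3 * k * q ^ 2) := ((by decide : Odd 3).mul hkodd).mul hqodd.pow
    exact padicValNat_two_eq_of_modEq
      ((T_two_pow_mul_modEq_of_odd hk₃ hkodd N q).trans (hodd.mul_two_pow_modEq_s15 _))

theorem stmt_15 (q k t : ℕ) (hq : 0 < q) (hk : 0 < k) (ht : 0 < t) (hqodd : Odd q) :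
    ((k = 1 ∨ Even k) → padicValNat 2 (T k (2 ^ t * q)) = t - 1) ∧
    (3 ≤ k → Odd k → padicValNat 2 (T k (2 ^ t * q)) = 2 * t - 2) :=
  stmt_15_general q k t hk ht hqodd
end
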